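/- For all integers 0 ≤ r ≤ n with n odd, one has bar([n]!_{q,π}) · [r]!_{q,π} · [n−r]!_{q,π} = [n]!_{q,π} · bar([r]!_{q,π}) · bar([n−r]!_{q,π}) in R; that is, when n is odd the (q,π)-quantum binomial coefficient [n choose r]_{q,π} = [n]!_{q,π}/([r]!_{q,π}[n−r]!_{q,π}) is invariant under the bar involution (stated with denominators cleared). -/
import Mathlib


/-- The `(q,π)`-quantum integer `[n]_{q,π} = ∑_{k=0}^{n-1} π^k q^{n-1-2k}`. -/
def qint {R : Type*} [CommRing R] (q π : Rˣ) (n : ℕ) : R :=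
  ∑ k ∈ Finset.range n, (π : R) ^ k * ((q ^ ((n : ℤ) - 1 - 2 * (k : ℤ)) : Rˣ) : R)

/-- The `(q,π)`-quantum factorial `[n]!_{q,π} = [n]_{q,π}[n−1]_{q,π}⋯[1]_{q,π}`. -/
def qfact {R : Type*} [CommRing R] (q π : Rˣ) (n : ℕ) : R :=
  ∏ m ∈ Finset.range n, qint q π (m + 1)

lemma bar_val_zpow {R : Type*} [CommRing R] (q : Rˣ) (bar : R →+* R)
    (hbarq : bar (q : R) = ((q⁻¹ : Rˣ) : R)) (e : ℤ) :
    bar ((q ^ e : Rˣ) : R) = ((q ^ (-e) : Rˣ) : R) := by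
  have key : ∀ m : ℕ, bar ((q ^ (m : ℤ) : Rˣ) : R) = ((q ^ (-(m : ℤ)) : Rˣ) : R) := by
    intro m
    rw [zpow_natCast, Units.val_pow_eq_pow_val, map_pow, hbarq, zpow_neg, zpow_natCast,
      ← inv_pow, Units.val_pow_eq_pow_val]
  rcases e with m | m
  · exact key m
  · have h1 : ((q ^ ((m : ℤ) + 1) : Rˣ) : R) * ((q ^ (Int.negSucc m) : Rˣ) : R) = 1 := by
      rw [← Units.val_mul, ← zpow_add, Int.negSucc_eq,
        show ((m : ℤ) + 1) + -((m : ℤ) + 1) = 0 by ring, zpow_zero, Units.val_one]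
    have h2 := congrArg bar h1
    rw [map_mul, map_one] at h2
    have h3 : ((m : ℤ) + 1) = ((m + 1 : ℕ) : ℤ) := by push_cast; ring
    rw [h3, key] at h2
    have h4 : ((q ^ (-((m + 1 : ℕ) : ℤ)) : Rˣ) : R) * ((q ^ (((m+1) : ℕ) : ℤ) : Rˣ) : R) = 1 := by
      rw [← Units.val_mul, ← zpow_add,
        show -(((m + 1 : ℕ)) : ℤ) + (((m + 1 : ℕ)) : ℤ) = 0 by ring, zpow_zero, Units.val_one]
    have : bar ((q ^ Int.negSucc m : Rˣ) : R)
        = ((q ^ (((m+1) : ℕ) : ℤ) : Rˣ) : R) * (((q ^ (-((m + 1 : ℕ) : ℤ)) : Rˣ) : R)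
            * bar ((q ^ Int.negSucc m : Rˣ) : R)) := by
      rw [← mul_assoc, mul_comm ((q ^ (((m+1) : ℕ) : ℤ) : Rˣ) : R), h4, one_mul]
    rw [this, h2, mul_one]
    congr 1

lemma pi_sq_one {R : Type*} [CommRing R] (π : Rˣ) (hπ : π ^ 2 = 1) : (π : R) ^ 2 = 1 := by
  rw [← Units.val_pow_eq_pow_val, hπ, Units.val_one]

lemma bar_qint {R : Type*} [CommRing R] (q π : Rˣ) (hπ : π ^ 2 = 1)
    (bar : R →+* R) (hbarq : bar (q : R) = ((q⁻¹ : Rˣ) : R)) (hbarπ : bar (π : R) = (π : R))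
    (m : ℕ) : bar (qint q π (m + 1)) = (π : R) ^ m * qint q π (m + 1) := by
  have hp2 := pi_sq_one π hπ
  unfold qint
  rw [map_sum, Finset.mul_sum]
  rw [← Finset.sum_range_reflect (fun k => (π : R) ^ m *
      ((π : R) ^ k * ((q ^ (((m + 1 : ℕ) : ℤ) - 1 - 2 * (k : ℤ)) : Rˣ) : R)))]
  apply Finset.sum_congr rfl
  intro k hk
  have hkm : k ≤ m := by
    simp only [Finset.mem_range] at hk; omega
  rw [map_mul, map_pow, hbarπ, bar_val_zpow q bar hbarq]
  have he : -(((m + 1 : ℕ) : ℤ) - 1 - 2 * (k : ℤ))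
      = ((m + 1 : ℕ) : ℤ) - 1 - 2 * ((m + 1 - 1 - k : ℕ) : ℤ) := by
    have hmk : ((m + 1 - 1 - k : ℕ) : ℤ) = (m : ℤ) - k := by omega
    rw [hmk]; push_cast; ring
  rw [he]
  have hpi : (π : R) ^ k = (π : R) ^ m * (π : R) ^ (m + 1 - 1 - k) := by
    have h2k : m + (m + 1 - 1 - k) = k + 2 * (m - k) := by omega
    have : (π : R) ^ m * (π : R) ^ (m + 1 - 1 - k) = (π : R) ^ k := by
      rw [← pow_add, h2k, pow_add, pow_mul, hp2, one_pow, mul_one]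
    exact this.symm
  rw [hpi, mul_assoc]

lemma bar_qfact {R : Type*} [CommRing R] (q π : Rˣ) (hπ : π ^ 2 = 1)
    (bar : R →+* R) (hbarq : bar (q : R) = ((q⁻¹ : Rˣ) : R)) (hbarπ : bar (π : R) = (π : R))
    (n : ℕ) : bar (qfact q π n) = (π : R) ^ (∑ i ∈ Finset.range n, i) * qfact q π n := by
  induction n with
  | zero => simp [qfact]
  | succ n ih =>
    rw [qfact, Finset.prod_range_succ, ← qfact, map_mul, ih,
      bar_qint q π hπ bar hbarq hbarπ, Finset.sum_range_succ, pow_add]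
    ring

/-- For `0 ≤ r ≤ n` with `n` odd:
`bar([n]!)·[r]!·[n−r]! = [n]!·bar([r]!)·bar([n−r]!)`, i.e. for odd `n` the quantum binomial
coefficient `[n choose r]_{q,π}` is bar-invariant (stated with denominators cleared). -/
theorem bar_qbinom_odd {R : Type*} [CommRing R] (q π : Rˣ) (hπ : π ^ 2 = 1)
    (bar : R →+* R) (hbarq : bar (q : R) = ((q⁻¹ : Rˣ) : R)) (hbarπ : bar (π : R) = (π : R))
    (r n : ℕ) (hrn : r ≤ n) (hodd : Odd n) :
    bar (qfact q π n) * qfact q π r * qfact q π (n - r)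
      = qfact q π n * bar (qfact q π r) * bar (qfact q π (n - r)) := by
  have hp2 := pi_sq_one π hπ
  set s := n - r with hs
  have hn : n = r + s := by omega
  rw [bar_qfact q π hπ bar hbarq hbarπ, bar_qfact q π hπ bar hbarq hbarπ,
    bar_qfact q π hπ bar hbarq hbarπ]
  have hsum : (∑ i ∈ Finset.range n, i)
      = (∑ i ∈ Finset.range r, i) + (∑ i ∈ Finset.range s, i) + r * s := by
    have this2 : ∑ i ∈ Finset.range s, (r + i) = s * r + ∑ i ∈ Finset.range s, i := by
      rw [Finset.sum_add_distrib, Finset.sum_const, Finset.card_range, smul_eq_mul]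
    rw [hn, Finset.sum_range_add, this2]
    ring
  have hrs : Even (r * s) := by
    rcases Nat.even_or_odd r with h | h
    · exact h.mul_right s
    · rcases Nat.even_or_odd s with h2 | h2
      · exact h2.mul_left r
      · exfalso
        have := h.add_odd h2
        rw [← hn] at this
        exact (Nat.not_even_iff_odd.mpr hodd) this
  obtain ⟨t, ht⟩ := hrs
  have hpow : (π : R) ^ (∑ i ∈ Finset.range n, i)
      = (π : R) ^ (∑ i ∈ Finset.range r, i) * (π : R) ^ (∑ i ∈ Finset.range s, i) := by
    rw [hsum, pow_add, pow_add, ht, show t + t = 2 * t by ring, pow_mul, hp2, one_pow,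
      mul_one]
  rw [hpow]
  ring
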